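/- arXiv:1909.07232 — 4 statements merged into one kernel-verified Lean document; each statement's English description precedes it below -/
import Mathlib

section
/- For every integer d ≥ 1, ∫_0^1 sup_{t ∈ ℝ} |Φ_d(t, v)| dv ≤ 5 + ln d, where Φ_d(t, v) = ∑_{j=1}^{d} Trg_j(t)·Trg_j(t − v). -/
/-! For odd `d = 2m + 1` the sine and cosine of each frequency `k ≤ m` pair up into
`2 cos(2πkv)`, so `Φ_d(t, v)` is the Dirichlet kernel `D_m(v)`, independent of `t`; for even `d`
one extra term of size at most `2` remains. The classical bounds `|D_m| ≤ 2m + 1` and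
`|D_m(v)| ≤ 1 / sin(πv) ≤ 1 / (2v)`, integrated on either side of `v = 1/(4m + 2)` and
reflected through `v = 1/2`, give `∫₀¹ |D_m| ≤ 1 + log(2m + 1)`. -/

open Real

/-- The trigonometric basis of 1-periodic functions: `Trg 1 x = 1` and, for `j ≥ 2`,
`Trg j x = √2 cos(2π⌊j/2⌋x)` if `j` is even and `Trg j x = √2 sin(2π⌊j/2⌋x)` if `j` is odd. -/
noncomputable def Trg (j : ℕ) (x : ℝ) : ℝ :=
  if j = 1 then 1
  else if j % 2 = 0 then Real.sqrt 2 * Real.cos (2 * Real.pi * ((j / 2 : ℕ) : ℝ) * x)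
  else Real.sqrt 2 * Real.sin (2 * Real.pi * ((j / 2 : ℕ) : ℝ) * x)

open MeasureTheory

noncomputable def dirichletKernel (m : ℕ) (v : ℝ) : ℝ :=
  1 + ∑ k ∈ Finset.Icc 1 m, 2 * cos (2 * π * k * v)

lemma Trg_two_mul (k : ℕ) (x : ℝ) : Trg (2 * k) x = √2 * cos (2 * π * k * x) := by
  simp [Trg, show 2 * k ≠ 1 by omega]

lemma Trg_two_mul_add_one {k : ℕ} (hk : 1 ≤ k) (x : ℝ) :
    Trg (2 * k + 1) x = √2 * sin (2 * π * k * x) := by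
  simp [Trg, show k ≠ 0 by omega, show (2 * k + 1) / 2 = k by omega]

lemma abs_Trg_le (j : ℕ) (x : ℝ) : |Trg j x| ≤ √2 := by
  have h1 : (1 : ℝ) ≤ √2 := by simp [one_le_sqrt]
  unfold Trg
  split_ifs
  · simp [h1]
  · rw [abs_mul, abs_of_nonneg (sqrt_nonneg 2)]
    exact mul_le_of_le_one_right (sqrt_nonneg 2) (abs_cos_le_one _)
  · rw [abs_mul, abs_of_nonneg (sqrt_nonneg 2)]
    exact mul_le_of_le_one_right (sqrt_nonneg 2) (abs_sin_le_one _)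

lemma abs_Trg_mul_Trg_le (j : ℕ) (x y : ℝ) : |Trg j x * Trg j y| ≤ 2 := by
  rw [abs_mul, ← mul_self_sqrt zero_le_two]
  exact mul_le_mul (abs_Trg_le j x) (abs_Trg_le j y) (abs_nonneg _) (sqrt_nonneg 2)

lemma Trg_mul_Trg_sub_add {k : ℕ} (hk : 1 ≤ k) (t v : ℝ) :
    Trg (2 * k) t * Trg (2 * k) (t - v) + Trg (2 * k + 1) t * Trg (2 * k + 1) (t - v)
      = 2 * cos (2 * π * k * v) := by
  rw [Trg_two_mul, Trg_two_mul, Trg_two_mul_add_one hk, Trg_two_mul_add_one hk,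
    show 2 * π * k * v = 2 * π * k * t - 2 * π * k * (t - v) by ring, cos_sub]
  linear_combination (cos (2 * π * k * t) * cos (2 * π * k * (t - v))
    + sin (2 * π * k * t) * sin (2 * π * k * (t - v))) * mul_self_sqrt zero_le_two

lemma sum_Trg_mul_Trg_sub_two_mul_add_one (m : ℕ) (t v : ℝ) :
    ∑ j ∈ Finset.Icc 1 (2 * m + 1), Trg j t * Trg j (t - v) = dirichletKernel m v := by
  induction m with
  | zero => simp [Trg, dirichletKernel]
  | succ m ih =>
    rw [show 2 * (m + 1) + 1 = 2 * m + 1 + 1 + 1 by ring, Finset.sum_Icc_succ_top (by omega),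
      Finset.sum_Icc_succ_top (by omega), ih, add_assoc,
      show 2 * m + 1 + 1 = 2 * (m + 1) by ring, Trg_mul_Trg_sub_add (by omega),
      dirichletKernel, dirichletKernel, Finset.sum_Icc_succ_top (by omega)]
    ring

lemma sin_mul_dirichletKernel (m : ℕ) (v : ℝ) :
    sin (π * v) * dirichletKernel m v = sin ((2 * m + 1) * π * v) := by
  induction m with
  | zero => simp [dirichletKernel]
  | succ m ih =>
    have h : sin (π * v) * dirichletKernel (m + 1) v
        = sin (π * v) * dirichletKernel m v + 2 * sin (π * v) * cos (2 * π * (m + 1) * v) := by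
      rw [dirichletKernel, dirichletKernel, Finset.sum_Icc_succ_top (by omega)]
      push_cast
      ring
    rw [h, ih, two_mul_sin_mul_cos,
      show π * v - 2 * π * (m + 1) * v = -((2 * m + 1) * π * v) by ring, sin_neg]
    push_cast
    ring_nf

lemma abs_dirichletKernel_le (m : ℕ) (v : ℝ) : |dirichletKernel m v| ≤ 2 * m + 1 := by
  calc |dirichletKernel m v|
      ≤ |1| + ∑ k ∈ Finset.Icc 1 m, |2 * cos (2 * π * k * v)| :=
        (abs_add_le _ _).trans (add_le_add_right (Finset.abs_sum_le_sum_abs _ _) _)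
    _ ≤ 1 + ∑ _k ∈ Finset.Icc 1 m, 2 := by
        gcongr with k
        · simp
        · rw [abs_mul, abs_two]
          linarith [abs_cos_le_one (2 * π * k * v)]
    _ = 2 * m + 1 := by
        simp only [Finset.sum_const, Nat.card_Icc, add_tsub_cancel_right, nsmul_eq_mul]
        ring

lemma abs_dirichletKernel_le_inv (m : ℕ) {v : ℝ} (h0 : 0 < v) (h1 : v ≤ 1 / 2) :
    |dirichletKernel m v| ≤ (2 * v)⁻¹ := by
  have hsin : 2 * v ≤ sin (π * v) := by
    simpa [← mul_assoc, div_mul_cancel₀ π two_ne_zero] using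
      le_sin_mul (x := 2 * v) (by linarith) (by linarith)
  have hsin_pos : 0 < sin (π * v) := by linarith
  have h : sin (π * v) * |dirichletKernel m v| ≤ 1 := by
    rw [← abs_of_pos hsin_pos, ← abs_mul, sin_mul_dirichletKernel]
    exact abs_sin_le_one _
  rw [← one_div, le_div_iff₀ (by positivity)]
  nlinarith [mul_le_mul_of_nonneg_left hsin (abs_nonneg (dirichletKernel m v))]

lemma dirichletKernel_one_sub (m : ℕ) (v : ℝ) :
    dirichletKernel m (1 - v) = dirichletKernel m v := by
  unfold dirichletKernel
  congr 1
  refine Finset.sum_congr rfl fun k _ ↦ ?_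
  rw [show 2 * π * k * (1 - v) = k * (2 * π) - 2 * π * k * v by ring, cos_nat_mul_two_pi_sub]

lemma continuous_dirichletKernel (m : ℕ) : Continuous (dirichletKernel m) := by
  unfold dirichletKernel
  fun_prop

lemma intervalIntegral.integral_mono_of_nonneg {f g : ℝ → ℝ} {a b : ℝ} {μ : Measure ℝ}
    (hab : a ≤ b) (hf : 0 ≤ f) (hg : IntervalIntegrable g μ a b) (hfg : f ≤ g) :
    ∫ x in a..b, f x ∂μ ≤ ∫ x in a..b, g x ∂μ := by
  rw [integral_of_le hab, integral_of_le hab]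
  exact MeasureTheory.integral_mono_of_nonneg (ae_of_all _ hf) hg.1 (ae_of_all _ hfg)

lemma integral_zero_one_eq_two_mul_of_one_sub {f : ℝ → ℝ}
    (hf : IntervalIntegrable f volume 0 1) (hsymm : ∀ v, f (1 - v) = f v) :
    ∫ v in (0 : ℝ)..1, f v = 2 * ∫ v in (0 : ℝ)..1 / 2, f v := by
  have hreflect : ∫ v in (1 / 2 : ℝ)..1, f v = ∫ v in (0 : ℝ)..1 / 2, f v := by
    have h := intervalIntegral.integral_comp_sub_left (a := 0) (b := 1 / 2) f 1
    rw [show (1 : ℝ) - 1 / 2 = 1 / 2 by norm_num, sub_zero] at h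
    simpa only [hsymm] using h.symm
  have hmid : (1 / 2 : ℝ) ∈ Set.uIcc 0 1 := Set.mem_uIcc_of_le (by norm_num) (by norm_num)
  rw [← intervalIntegral.integral_add_adjacent_intervals
    (hf.mono_set (Set.uIcc_subset_uIcc_left hmid)) (hf.mono_set (Set.uIcc_subset_uIcc_right hmid)),
    hreflect]
  ring

lemma integral_le_of_le_of_le_inv {f : ℝ → ℝ} {n : ℝ} (hn : 1 ≤ n)
    (hf : IntervalIntegrable f volume 0 (1 / 2))
    (h_le : ∀ v ∈ Set.Icc (0 : ℝ) (1 / 2), f v ≤ n)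
    (h_le_inv : ∀ v ∈ Set.Ioc (0 : ℝ) (1 / 2), f v ≤ (2 * v)⁻¹) :
    ∫ v in (0 : ℝ)..1 / 2, f v ≤ (1 + log n) / 2 := by
  -- split at `a`, where the two bounds cross
  set a := (2 * n)⁻¹ with ha_def
  have ha0 : 0 < a := by positivity
  have ha : a ≤ 1 / 2 := by
    rw [one_div]; exact inv_anti₀ two_pos (by linarith)
  have ha_mem : a ∈ Set.uIcc 0 (1 / 2) := Set.mem_uIcc_of_le ha0.le ha
  have h_near : ∫ v in (0 : ℝ)..a, f v ≤ 1 / 2 :=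
    calc ∫ v in (0 : ℝ)..a, f v ≤ ∫ _ in (0 : ℝ)..a, n :=
          intervalIntegral.integral_mono_on ha0.le
            (hf.mono_set (Set.uIcc_subset_uIcc_left ha_mem)) intervalIntegrable_const
            fun v hv ↦ h_le v ⟨hv.1, hv.2.trans ha⟩
      _ = 1 / 2 := by
          rw [intervalIntegral.integral_const, sub_zero, smul_eq_mul, ha_def]
          field_simp
  have h_far : ∫ v in a..1 / 2, f v ≤ log n / 2 :=
    calc ∫ v in a..1 / 2, f v ≤ ∫ v in a..1 / 2, 2⁻¹ * v⁻¹ := by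
          refine intervalIntegral.integral_mono_on ha
            (hf.mono_set (Set.uIcc_subset_uIcc_right ha_mem)) ?_ fun v hv ↦ ?_
          · refine (intervalIntegral.intervalIntegrable_inv (fun v hv ↦ ?_)
              continuousOn_id).const_mul _
            rw [Set.uIcc_of_le ha] at hv
            exact (ha0.trans_le hv.1).ne'
          · rw [← mul_inv]; exact h_le_inv v ⟨ha0.trans_le hv.1, hv.2⟩
      _ = log n / 2 := by
          rw [intervalIntegral.integral_const_mul, integral_inv_of_pos ha0 (by norm_num),
            show (1 / 2 : ℝ) / a = n by rw [ha_def, div_inv_eq_mul]; ring]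
          ring
  rw [← intervalIntegral.integral_add_adjacent_intervals
    (hf.mono_set (Set.uIcc_subset_uIcc_left ha_mem))
    (hf.mono_set (Set.uIcc_subset_uIcc_right ha_mem))]
  linarith

lemma integral_abs_dirichletKernel_le (m : ℕ) :
    ∫ v in (0 : ℝ)..1, |dirichletKernel m v| ≤ 1 + log (2 * m + 1) := by
  have hint (a b : ℝ) : IntervalIntegrable (fun v ↦ |dirichletKernel m v|) volume a b :=
    (continuous_dirichletKernel m).abs.intervalIntegrable a b
  rw [integral_zero_one_eq_two_mul_of_one_sub (hint 0 1) fun v ↦ by rw [dirichletKernel_one_sub]]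
  have := integral_le_of_le_of_le_inv (by linarith [m.cast_nonneg (α := ℝ)]) (hint 0 (1 / 2))
    (fun v _ ↦ abs_dirichletKernel_le m v) fun v hv ↦ abs_dirichletKernel_le_inv m hv.1 hv.2
  linarith

lemma abs_sum_Trg_mul_Trg_sub_two_mul_add_two_le (m : ℕ) (t v : ℝ) :
    |∑ j ∈ Finset.Icc 1 (2 * m + 2), Trg j t * Trg j (t - v)|
      ≤ |dirichletKernel m v| + 2 := by
  rw [Finset.sum_Icc_succ_top (by omega), sum_Trg_mul_Trg_sub_two_mul_add_one]
  exact (abs_add_le _ _).trans (add_le_add_right (abs_Trg_mul_Trg_le _ _ _) _)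

/-- Bound on the integral over one period of the sup over `t` of the kernel
`Φ_d(t,v) = ∑_{j=1}^d Trg_j(t) Trg_j(t-v)`. -/
theorem integral_sup_trig_kernel_le (d : ℕ) (hd : 1 ≤ d) :
    ∫ v in (0 : ℝ)..1, (⨆ t : ℝ, |∑ j ∈ Finset.Icc 1 d, Trg j t * Trg j (t - v)|)
      ≤ 5 + Real.log d := by
  obtain ⟨m, hm⟩ : ∃ m, d = 2 * m + 1 ∨ d = 2 * m + 2 := ⟨(d - 1) / 2, by omega⟩
  have hsup (v : ℝ) :
      (⨆ t : ℝ, |∑ j ∈ Finset.Icc 1 d, Trg j t * Trg j (t - v)|)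
        ≤ |dirichletKernel m v| + 2 := by
    refine ciSup_le fun t ↦ ?_
    rcases hm with rfl | rfl
    · rw [sum_Trg_mul_Trg_sub_two_mul_add_one]; linarith
    · exact abs_sum_Trg_mul_Trg_sub_two_mul_add_two_le m t v
  have hlog : log (2 * m + 1) ≤ log d :=
    log_le_log (by positivity) (by exact_mod_cast (by omega : 2 * m + 1 ≤ d))
  calc ∫ v in (0 : ℝ)..1, (⨆ t : ℝ, |∑ j ∈ Finset.Icc 1 d, Trg j t * Trg j (t - v)|)
      ≤ ∫ v in (0 : ℝ)..1, (|dirichletKernel m v| + 2) :=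
        intervalIntegral.integral_mono_of_nonneg zero_le_one
          (fun v ↦ Real.iSup_nonneg fun t ↦ abs_nonneg _)
          (((continuous_dirichletKernel m).abs.add continuous_const).intervalIntegrable _ _) hsup
    _ = (∫ v in (0 : ℝ)..1, |dirichletKernel m v|) + 2 := by
        rw [intervalIntegral.integral_add
          ((continuous_dirichletKernel m).abs.intervalIntegrable _ _) intervalIntegrable_const]
        simp
    _ ≤ 5 + log d := by linarith [integral_abs_dirichletKernel_le m]
end

section
/- Let a_max ≥ 0, let a be a real number with −a_max ≤ a ≤ 0, and let j, p be integers with 2 ≤ j ≤ p. Set θ_j = 2π⌊j/2⌋/p. Then (1/p)·|Re( 1/(1 − e^{a/p + iθ_j}) )| ≤ a_max·e^{a_max}/j² + 1/(2p). -/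
/-!
Writing `w = e^{x + iθ}`, the identity `2 (1 - Re w) = |1 - w|² + (1 - |w|²)` gives
`Re 1/(1 - w) = 1/2 + (1 - |w|²) / (2 |1 - w|²)`, and the `1/2` produces the term `1/(2p)`.
For `x = a/p` one has `1 - |w|² = 1 - e^{2a/p} ≤ 2 a_max / p`, while
`|1 - w|² = (1 - e^x)² + 2 e^x (1 - cos θ) ≥ 2 e^{-a_max} (1 - cos θ_j)`, and Jordan's inequality
`1 - cos θ ≥ 2 θ² / π²` on `[-π, π]` bounds this below by `e^{-a_max} j² / p²`.
-/

open Real Complex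

theorem Complex.re_one_div_one_sub (w : ℂ) (hw : w ≠ 1) :
    (1 / (1 - w)).re = 1 / 2 + (1 - normSq w) / (2 * normSq (1 - w)) := by
  have hD : normSq (1 - w) ≠ 0 := normSq_eq_zero.not.mpr (sub_ne_zero.mpr hw.symm)
  have key : 2 * (1 - w.re) = normSq (1 - w) + (1 - normSq w) := by
    simp only [normSq_apply, sub_re, sub_im, one_re, one_im]
    ring
  rw [one_div, inv_re, sub_re, one_re]
  field_simp
  linarith

theorem Complex.normSq_exp_ofReal_add_mul_I (x θ : ℝ) :
    normSq (exp (x + θ * I)) = Real.exp (2 * x) := by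
  rw [normSq_eq_norm_sq, norm_exp, ← Real.exp_nat_mul]
  simp

theorem Complex.two_mul_exp_mul_one_sub_cos_le_normSq (x θ : ℝ) :
    2 * Real.exp x * (1 - Real.cos θ) ≤ normSq (1 - exp (x + θ * I)) := by
  have hre : (exp (x + θ * I)).re = Real.exp x * Real.cos θ := by simp [exp_re]
  have him : (exp (x + θ * I)).im = Real.exp x * Real.sin θ := by simp [exp_im]
  have h : normSq (1 - exp (x + θ * I)) =
      (1 - Real.exp x) ^ 2 + 2 * Real.exp x * (1 - Real.cos θ) := by
    rw [normSq_apply, sub_re, sub_im, one_re, one_im, hre, him]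
    linear_combination Real.exp x ^ 2 * Real.sin_sq_add_cos_sq θ
  rw [h]
  nlinarith [sq_nonneg (1 - Real.exp x)]

theorem Real.eight_mul_sq_div_sq_le_one_sub_cos (m p : ℝ) (hm : 0 ≤ m) (hmp : 2 * m ≤ p) :
    8 * m ^ 2 / p ^ 2 ≤ 1 - cos (2 * π * m / p) := by
  rcases (hm.trans (by linarith : m ≤ 2 * m) |>.trans hmp).eq_or_lt with rfl | hp
  · simp
  have hθ : |2 * π * m / p| ≤ π := by
    rw [abs_of_nonneg (by positivity), div_le_iff₀ hp]
    nlinarith [pi_pos]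
  have hsq : 2 / π ^ 2 * (2 * π * m / p) ^ 2 = 8 * m ^ 2 / p ^ 2 := by
    field_simp [pi_ne_zero]
    ring
  linarith [cos_le_one_sub_mul_cos_sq hθ]

theorem Complex.exp_mul_sq_div_sq_le_normSq_one_sub_exp (x : ℝ) {j p : ℕ} (hj : 2 ≤ j)
    (hjp : j ≤ p) :
    Real.exp x * j ^ 2 / p ^ 2 ≤
      normSq (1 - exp (x + (2 * π * ((j / 2 : ℕ) : ℝ) / p : ℝ) * I)) := by
  set m := j / 2
  have hjm : (j : ℝ) ≤ 4 * m := by exact_mod_cast (by omega : j ≤ 4 * m)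
  have hmp : 2 * (m : ℝ) ≤ p := by exact_mod_cast (by omega : 2 * m ≤ p)
  calc Real.exp x * j ^ 2 / p ^ 2 ≤ Real.exp x * (4 * m) ^ 2 / p ^ 2 := by gcongr
    _ = 2 * Real.exp x * (8 * m ^ 2 / p ^ 2) := by ring
    _ ≤ 2 * Real.exp x * (1 - Real.cos (2 * π * m / p)) := by
      gcongr
      exact Real.eight_mul_sq_div_sq_le_one_sub_cos _ _ m.cast_nonneg hmp
    _ ≤ _ := two_mul_exp_mul_one_sub_cos_le_normSq _ _

theorem re_resolvent_bound_general (amax a : ℝ) (ha1 : -amax ≤ a)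
    (ha2 : a ≤ 0) (j p : ℕ) (hj : 2 ≤ j) (hjp : j ≤ p) :
    (1 / (p : ℝ)) *
        |(1 / (1 - Complex.exp (((a / p : ℝ) : ℂ)
            + ((2 * Real.pi * ((j / 2 : ℕ) : ℝ) / p : ℝ) : ℂ) * Complex.I))).re|
      ≤ amax * Real.exp amax / (j : ℝ) ^ 2 + 1 / (2 * p) := by
  set w := Complex.exp (((a / p : ℝ) : ℂ) + ((2 * π * ((j / 2 : ℕ) : ℝ) / p : ℝ) : ℂ) * I)
  have hp : (1 : ℝ) ≤ p := by exact_mod_cast (by omega : 1 ≤ p)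
  have hamax : 0 ≤ amax := by linarith
  have hap : -amax ≤ a / p := ha1.trans (by rw [le_div_iff₀ (by positivity)]; nlinarith)
  have hD : Real.exp (-amax) * j ^ 2 / p ^ 2 ≤ normSq (1 - w) :=
    le_trans (by gcongr) (exp_mul_sq_div_sq_le_normSq_one_sub_exp _ hj hjp)
  have hDpos : 0 < normSq (1 - w) := lt_of_lt_of_le (by positivity) hD
  have hnum0 : 0 ≤ 1 - normSq w := by
    rw [normSq_exp_ofReal_add_mul_I, sub_nonneg, exp_le_one_iff]
    linarith [div_nonpos_of_nonpos_of_nonneg ha2 (by positivity : (0 : ℝ) ≤ p)]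
  have hnum : 1 - normSq w ≤ 2 * amax / p := by
    have : 2 * -a / p ≤ 2 * amax / p := by gcongr; linarith
    rw [normSq_exp_ofReal_add_mul_I]
    linarith [add_one_le_exp (2 * (a / p)), show 2 * -a / p = -(2 * (a / p)) by ring]
  rw [re_one_div_one_sub w (fun h => by simp [h] at hDpos), abs_of_nonneg (by positivity)]
  calc 1 / (p : ℝ) * (1 / 2 + (1 - normSq w) / (2 * normSq (1 - w)))
      = 1 / (2 * p) + (1 - normSq w) / (2 * p * normSq (1 - w)) := by field_simp
    _ ≤ 1 / (2 * p) + (2 * amax / p) / (2 * p * (Real.exp (-amax) * j ^ 2 / p ^ 2)) := by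
      gcongr
    _ = amax * Real.exp amax / (j : ℝ) ^ 2 + 1 / (2 * p) := by
      rw [Real.exp_neg]
      field_simp
      ring

/-- Bound on the real part of the resolvent of the complex geometric ratio
`q̃_j = e^{a/p + iθ_j}` with `θ_j = 2π⌊j/2⌋/p`, for `-a_max ≤ a ≤ 0` and `2 ≤ j ≤ p`:
`(1/p)|Re(1/(1 - q̃_j))| ≤ a_max e^{a_max}/j² + 1/(2p)`. -/
theorem re_resolvent_bound (amax a : ℝ) (hamax : 0 ≤ amax) (ha1 : -amax ≤ a)
    (ha2 : a ≤ 0) (j p : ℕ) (hj : 2 ≤ j) (hjp : j ≤ p) :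
    (1 / (p : ℝ)) *
        |(1 / (1 - Complex.exp (((a / p : ℝ) : ℂ)
            + ((2 * Real.pi * ((j / 2 : ℕ) : ℝ) / p : ℝ) : ℂ) * Complex.I))).re|
      ≤ amax * Real.exp amax / (j : ℝ) ^ 2 + 1 / (2 * p) :=
  re_resolvent_bound_general amax a ha1 ha2 j p hj hjp
end

section
/- Let x be a real number and let j, p be integers with 2 ≤ j ≤ p, and set θ_j = 2π⌊j/2⌋/p. Then cosh x > cos θ_j and |cos θ_j / (2·(cos θ_j − cosh x))| ≤ p²/j². -/
open Real

/-!
Write `θ = 2t` with `t = π⌊j/2⌋/p ∈ (0, π/2]`. Jordan's inequality `sin t ≥ 2t/π` together with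
`j ≤ 4⌊j/2⌋` gives `sin t ≥ j/(2p)`, hence
`cosh x - cos θ ≥ 1 - cos θ = 2 sin² t ≥ j²/(2p²) > 0`; since `|cos θ| ≤ 1` the quotient is at most
`1/(2 · j²/(2p²)) = p²/j²`.
-/

lemma two_mul_div_le_sin_pi_mul_div {m p : ℝ} (hm : 0 ≤ m) (hp : 0 < p) (hmp : 2 * m ≤ p) :
    2 * m / p ≤ sin (π * m / p) := by
  have h := mul_le_sin (x := π * m / p) (by positivity) (by
    rw [div_le_div_iff₀ hp two_pos]; nlinarith [pi_pos])
  calc 2 * m / p = 2 / π * (π * m / p) := by field_simp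
    _ ≤ sin (π * m / p) := h

lemma div_two_mul_le_sin_pi_mul_half_div {j p : ℕ} (hj : 2 ≤ j) (hjp : j ≤ p) :
    (j : ℝ) / (2 * p) ≤ sin (π * ((j / 2 : ℕ) : ℝ) / p) := by
  have hp : (0 : ℝ) < p := by norm_cast; omega
  have hj4 : (j : ℝ) ≤ 4 * (j / 2 : ℕ) := by norm_cast; omega
  have h2m : 2 * ((j / 2 : ℕ) : ℝ) ≤ p := by norm_cast; omega
  calc (j : ℝ) / (2 * p) ≤ 2 * ((j / 2 : ℕ) : ℝ) / p := by
        rw [div_le_div_iff₀ (by positivity) hp]; nlinarith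
    _ ≤ sin (π * ((j / 2 : ℕ) : ℝ) / p) := two_mul_div_le_sin_pi_mul_div (by positivity) hp h2m

lemma sq_div_two_mul_sq_le_one_sub_cos_grid_angle {j p : ℕ} (hj : 2 ≤ j) (hjp : j ≤ p) :
    (j : ℝ) ^ 2 / (2 * (p : ℝ) ^ 2) ≤ 1 - cos (2 * π * ((j / 2 : ℕ) : ℝ) / p) := by
  have hsin := div_two_mul_le_sin_pi_mul_half_div hj hjp
  have hp : (0 : ℝ) < p := by norm_cast; omega
  have hθ : 2 * π * ((j / 2 : ℕ) : ℝ) / p = 2 * (π * ((j / 2 : ℕ) : ℝ) / p) := by ring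
  rw [hθ, cos_two_mul_eq_one_sub]
  calc (j : ℝ) ^ 2 / (2 * (p : ℝ) ^ 2) = 2 * ((j : ℝ) / (2 * p)) ^ 2 := by field_simp
    _ ≤ 2 * sin (π * ((j / 2 : ℕ) : ℝ) / p) ^ 2 := by gcongr
    _ = _ := by ring

lemma abs_div_two_mul_sub_le {c b ε : ℝ} (hc : |c| ≤ 1) (hε : 0 < ε) (hcb : ε ≤ b - c) :
    |c / (2 * (c - b))| ≤ 1 / (2 * ε) := by
  have hden : |2 * (c - b)| = 2 * (b - c) := by rw [abs_of_neg (by linarith)]; ring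
  rw [abs_div, hden]
  calc |c| / (2 * (b - c)) ≤ 1 / (2 * (b - c)) := by gcongr; linarith
    _ ≤ 1 / (2 * ε) := by gcongr

/-- For the grid angle `θ_j = 2π⌊j/2⌋/p` with `2 ≤ j ≤ p` and any real `x`:
`cosh x > cos θ_j` and `|cos θ_j / (2(cos θ_j - cosh x))| ≤ p²/j²`. -/
theorem cross_term_bound (x : ℝ) (j p : ℕ) (hj : 2 ≤ j) (hjp : j ≤ p) :
    let θ := 2 * Real.pi * ((j / 2 : ℕ) : ℝ) / p
    Real.cos θ < Real.cosh x ∧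
      |Real.cos θ / (2 * (Real.cos θ - Real.cosh x))| ≤ (p : ℝ) ^ 2 / (j : ℝ) ^ 2 := by
  intro θ
  have hgap : (j : ℝ) ^ 2 / (2 * (p : ℝ) ^ 2) ≤ cosh x - cos θ := by
    linarith [sq_div_two_mul_sq_le_one_sub_cos_grid_angle hj hjp, one_le_cosh x]
  have hpos : 0 < (j : ℝ) ^ 2 / (2 * (p : ℝ) ^ 2) := by
    have : (0 : ℝ) < j := by norm_cast; omega
    have : (0 : ℝ) < p := by norm_cast; omega
    positivity
  refine ⟨by linarith, ?_⟩
  calc |cos θ / (2 * (cos θ - cosh x))| ≤ 1 / (2 * ((j : ℝ) ^ 2 / (2 * (p : ℝ) ^ 2))) :=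
        abs_div_two_mul_sub_le (abs_cos_le_one θ) hpos hgap
    _ = (p : ℝ) ^ 2 / (j : ℝ) ^ 2 := by field_simp
end

section
/- Let a ≤ 0 be a real number, n > 0, and let s : [0, n] → ℝ be measurable with ∫_0^n s(t)² dt < ∞. Then | a·∫_0^n s(t)·( ∫_0^t e^{a(t−u)}·s(u)·(1 + e^{2au})/2 du ) dt | ≤ ∫_0^n s(t)² dt. -/
open Real MeasureTheory ProbabilityTheory Function Set
open scoped ENNReal

/-!
Since `(1 + e^{2au})/2 ∈ [0, 1]`, the inner integrand is dominated by `|a| e^{a(t-u)} |s u|`,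
and `|a| e^{a(t-u)} 1_{u ≤ t}` is the exponential density of rate `-a` at `t - u`. So the
kernel has all row and column integrals at most `1`, and the Schur test (AM–GM
`2xy ≤ x² + y²` and Tonelli) bounds the bilinear form by `∫ s²`. Working with lower Lebesgue
integrals avoids any integrability or measurability question for the inner integral.
-/

theorem ENNReal.two_mul_le_add_sq (x y : ℝ≥0∞) : 2 * x * y ≤ x ^ 2 + y ^ 2 := by
  rcases eq_or_ne x ⊤ with rfl | hx
  · rcases eq_or_ne y 0 with rfl | hy <;> simp [*]
  rcases eq_or_ne y ⊤ with rfl | hy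
  · rcases eq_or_ne x 0 with rfl | hx' <;> simp [*]
  lift x to NNReal using hx
  lift y to NNReal using hy
  exact_mod_cast _root_.two_mul_le_add_sq x y

section
variable {α : Type*} [MeasurableSpace α] {μ : Measure α} {K : α → α → ℝ≥0∞} {C : ℝ≥0∞}

theorem lintegral_lintegral_mul_le_of_lintegral_le (hK : Measurable (uncurry K))
    (hrow : ∀ t, ∫⁻ u, K t u ∂μ ≤ C) {g : α → ℝ≥0∞} (hg : Measurable g) :
    ∫⁻ t, ∫⁻ u, K t u * g t ∂μ ∂μ ≤ C * ∫⁻ t, g t ∂μ := by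
  calc ∫⁻ t, ∫⁻ u, K t u * g t ∂μ ∂μ = ∫⁻ t, (∫⁻ u, K t u ∂μ) * g t ∂μ :=
        lintegral_congr fun t => lintegral_mul_const _ hK.of_uncurry_left
    _ ≤ ∫⁻ t, C * g t ∂μ := by gcongr with t; exact hrow t
    _ = C * ∫⁻ t, g t ∂μ := lintegral_const_mul _ hg

theorem lintegral_mul_lintegral_le_of_schur_test [SFinite μ] (hK : Measurable (uncurry K))
    (hrow : ∀ t, ∫⁻ u, K t u ∂μ ≤ C) (hcol : ∀ u, ∫⁻ t, K t u ∂μ ≤ C)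
    {f : α → ℝ≥0∞} (hf : Measurable f) :
    ∫⁻ t, f t * ∫⁻ u, K t u * f u ∂μ ∂μ ≤ C * ∫⁻ t, f t ^ 2 ∂μ := by
  have hrow' := lintegral_lintegral_mul_le_of_lintegral_le hK hrow (hf.pow_const 2)
  have hcol' : ∫⁻ t, ∫⁻ u, K t u * f u ^ 2 ∂μ ∂μ ≤ C * ∫⁻ t, f t ^ 2 ∂μ := by
    rw [lintegral_lintegral_swap (by fun_prop)]
    exact lintegral_lintegral_mul_le_of_lintegral_le (K := swap K) (hK.comp measurable_swap) hcol
      (hf.pow_const 2)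
  suffices 2 * ∫⁻ t, f t * ∫⁻ u, K t u * f u ∂μ ∂μ ≤ 2 * (C * ∫⁻ t, f t ^ 2 ∂μ) by
    rwa [ENNReal.mul_le_mul_iff_right two_ne_zero ENNReal.ofNat_ne_top] at this
  calc 2 * ∫⁻ t, f t * ∫⁻ u, K t u * f u ∂μ ∂μ
      = ∫⁻ t, ∫⁻ u, K t u * (2 * f t * f u) ∂μ ∂μ := by
        rw [← lintegral_const_mul' _ _ ENNReal.ofNat_ne_top]
        refine lintegral_congr fun t => ?_
        rw [← mul_assoc, ← lintegral_const_mul (2 * f t) (f := fun u => K t u * f u)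
          (hK.of_uncurry_left.mul hf)]
        exact lintegral_congr fun u => by ring
    _ ≤ ∫⁻ t, ∫⁻ u, (K t u * f t ^ 2 + K t u * f u ^ 2) ∂μ ∂μ := by
        gcongr with t u
        rw [← mul_add]
        gcongr
        exact ENNReal.two_mul_le_add_sq _ _
    _ = ∫⁻ t, ∫⁻ u, K t u * f t ^ 2 ∂μ ∂μ + ∫⁻ t, ∫⁻ u, K t u * f u ^ 2 ∂μ ∂μ := by
        rw [← lintegral_add_left ?_]
        · exact lintegral_congr fun t => lintegral_add_left (hK.of_uncurry_left.mul_const _) _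
        · exact Measurable.lintegral_prod_right' (f := fun p => K p.1 p.2 * f p.1 ^ 2)
            (by fun_prop)
    _ ≤ 2 * (C * ∫⁻ t, f t ^ 2 ∂μ) := by
        rw [two_mul]; gcongr
theorem enorm_const_mul_integral_mul_le (c : ℝ) (f g : α → ℝ) :
    ‖c * ∫ x, f x * g x ∂μ‖ₑ ≤ ∫⁻ x, ‖f x‖ₑ * ‖c * g x‖ₑ ∂μ := by
  rw [← integral_const_mul]
  exact (enorm_integral_le_lintegral_enorm _).trans_eq
    (lintegral_congr fun x => by rw [mul_left_comm, enorm_mul])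

theorem ofReal_integral_sq_eq_lintegral_enorm_sq {f : α → ℝ}
    (hf : Integrable (fun x => f x ^ 2) μ) :
    ENNReal.ofReal (∫ x, f x ^ 2 ∂μ) = ∫⁻ x, ‖f x‖ₑ ^ 2 ∂μ := by
  rw [ofReal_integral_eq_lintegral_ofReal hf (ae_of_all _ fun x => sq_nonneg (f x))]
  refine lintegral_congr fun x => ?_
  rw [Real.enorm_eq_ofReal_abs, ← ENNReal.ofReal_pow (abs_nonneg _), sq_abs]

end

theorem lintegral_exponentialPDF_sub_left {r : ℝ} (hr : 0 < r) (t : ℝ) :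
    ∫⁻ u, exponentialPDF r (t - u) = 1 := by
  rw [lintegral_sub_left_eq_self (exponentialPDF r), lintegral_exponentialPDF_eq_one hr]

theorem lintegral_exponentialPDF_sub_right {r : ℝ} (hr : 0 < r) (u : ℝ) :
    ∫⁻ t, exponentialPDF r (t - u) = 1 := by
  rw [lintegral_sub_right_eq_self (exponentialPDF r), lintegral_exponentialPDF_eq_one hr]

theorem measurable_exponentialPDF_sub (r : ℝ) :
    Measurable (uncurry fun t u : ℝ => exponentialPDF r (t - u)) :=
  (measurable_exponentialPDFReal r).ennreal_ofReal.comp (measurable_fst.sub measurable_snd)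

section
variable {a t u : ℝ}

theorem enorm_ou_kernel_le (ha : a < 0) (hu : 0 ≤ u) (hut : u ≤ t) (x : ℝ) :
    ‖a * (exp (a * (t - u)) * x * ((1 + exp (2 * a * u)) / 2))‖ₑ
      ≤ exponentialPDF (-a) (t - u) * ‖x‖ₑ := by
  have hc : 0 ≤ (1 + exp (2 * a * u)) / 2 ∧ (1 + exp (2 * a * u)) / 2 ≤ 1 :=
    ⟨by positivity, by linarith [exp_le_one_iff.2 (by nlinarith : 2 * a * u ≤ 0)]⟩
  have hk : 0 ≤ -a * exp (a * (t - u)) := mul_nonneg (neg_nonneg.2 ha.le) (exp_pos _).le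
  rw [exponentialPDF_of_nonneg (sub_nonneg.2 hut), neg_mul_eq_neg_mul, neg_neg,
    Real.enorm_eq_ofReal_abs, Real.enorm_eq_ofReal_abs, ← ENNReal.ofReal_mul hk]
  refine ENNReal.ofReal_le_ofReal ?_
  calc |a * (exp (a * (t - u)) * x * ((1 + exp (2 * a * u)) / 2))|
      = -a * exp (a * (t - u)) * |x| * ((1 + exp (2 * a * u)) / 2) := by
        rw [abs_mul, abs_mul, abs_mul, abs_of_neg ha, abs_of_pos (exp_pos _), abs_of_nonneg hc.1]
        ring
    _ ≤ -a * exp (a * (t - u)) * |x| := mul_le_of_le_one_right (by positivity) hc.2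

theorem enorm_mul_integral_ou_kernel_le (ha : a < 0) (ht : 0 ≤ t) (s : ℝ → ℝ) :
    ‖a * ∫ u in (0 : ℝ)..t, exp (a * (t - u)) * s u * ((1 + exp (2 * a * u)) / 2)‖ₑ
      ≤ ∫⁻ u in Ioc 0 t, exponentialPDF (-a) (t - u) * ‖s u‖ₑ := by
  rw [← intervalIntegral.integral_const_mul, intervalIntegral.integral_of_le ht]
  exact (enorm_integral_le_lintegral_enorm _).trans
    (setLIntegral_mono' measurableSet_Ioc fun u hu => enorm_ou_kernel_le ha hu.1.le hu.2 _)

end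

/-- Deterministic bound `|a ∫_0^n s(t) ε̌_t(s) dt| ≤ ‖s‖²_{L²[0,n]}` for the
Ornstein–Uhlenbeck correction kernel
`ε̌_t(s) = a ∫_0^t e^{a(t-u)} s(u) (1 + e^{2au})/2 du` with nonpositive drift `a ≤ 0`. -/
theorem ou_correction_kernel_bound (a : ℝ) (ha : a ≤ 0) (n : ℝ) (hn : 0 < n)
    (s : ℝ → ℝ) (hs : Measurable s)
    (hs2 : IntegrableOn (fun t => (s t) ^ 2) (Set.Icc 0 n)) :
    |a * ∫ t in (0 : ℝ)..n,
        s t * ∫ u in (0 : ℝ)..t,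
          Real.exp (a * (t - u)) * s u * ((1 + Real.exp (2 * a * u)) / 2)|
      ≤ ∫ t in (0 : ℝ)..n, (s t) ^ 2 := by
  rcases ha.eq_or_lt with rfl | ha
  · simpa using intervalIntegral.integral_nonneg hn.le fun t _ => sq_nonneg (s t)
  rw [intervalIntegral.integral_of_le hn.le, intervalIntegral.integral_of_le hn.le,
    ← ENNReal.ofReal_le_ofReal_iff (integral_nonneg fun t => sq_nonneg (s t)),
    ofReal_integral_sq_eq_lintegral_enorm_sq (hs2.mono_set Ioc_subset_Icc_self),
    ← Real.enorm_eq_ofReal_abs]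
  calc _ ≤ _ := enorm_const_mul_integral_mul_le a _ _
    _ ≤ ∫⁻ t in Ioc 0 n, ‖s t‖ₑ * ∫⁻ u in Ioc 0 n, exponentialPDF (-a) (t - u) * ‖s u‖ₑ :=
        setLIntegral_mono' measurableSet_Ioc fun t ht => by
          gcongr
          exact (enorm_mul_integral_ou_kernel_le ha ht.1.le s).trans
            (lintegral_mono_set (Ioc_subset_Ioc_right ht.2))
    _ ≤ 1 * ∫⁻ t in Ioc 0 n, ‖s t‖ₑ ^ 2 :=
        lintegral_mul_lintegral_le_of_schur_test (measurable_exponentialPDF_sub (-a))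
          (fun t => (setLIntegral_le_lintegral _ _).trans_eq
            (lintegral_exponentialPDF_sub_left (neg_pos.2 ha) t))
          (fun u => (setLIntegral_le_lintegral _ _).trans_eq
            (lintegral_exponentialPDF_sub_right (neg_pos.2 ha) u))
          hs.enorm
    _ = ∫⁻ t in Ioc 0 n, ‖s t‖ₑ ^ 2 := one_mul _
end
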